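/- arXiv:0802.0800 — 3 statements merged into one kernel-verified Lean document; each statement's English description precedes it below -/
import Mathlib

section
/- Brown's exact sequence at C(Fb, Fb) for a fibration of groupoids: let F : B ⥤ C be a star-surjective functor between groupoids and b an object of B. Define δ : C(F b, F b) → π₀(K_s) by choosing, for γ : F b ⟶ F b, a lifting β : b ⟶ b' with F.map β = γ and setting δ(γ) = [b']. Then δ(γ) = [b] (the class of b in π₀(K_s)) if and only if γ = F.map β for some β : b ⟶ b in B. In other words, the sequence B(b, b) → C(F b, F b) →δ π₀(K_s) of pointed sets is exact. -/
open CategoryTheory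

universe v₁ v₂ u₁ u₂

/-- A functor between groupoids is star-surjective (a fibration) if every morphism of the
codomain starting at `F b₀` lifts to a morphism of the domain starting at `b₀`. -/
def StarSurjective {B : Type u₁} {C : Type u₂} [Groupoid.{v₁} B] [Groupoid.{v₂} C]
    (F : B ⥤ C) : Prop :=
  ∀ (b₀ : B) (c : C) (γ : F.obj b₀ ⟶ c),
    ∃ (b' : B) (h : F.obj b' = c) (β : b₀ ⟶ b'), F.map β = γ ≫ eqToHom h.symm

/-- Brown's exact sequence at `C(F b, F b)` for a fibration of groupoids: for
`γ : F b ⟶ F b` and any lifting `β : b ⟶ b'` of `γ`, the value `δ(γ) = [b']` of the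
connecting map equals the basepoint `[b]` of `π₀(K_s)` (i.e. `b'` is isomorphic to `b` in
the strict fiber `K_s` of `F` over `F b`) if and only if `γ = F.map β₀` for some
`β₀ : b ⟶ b`.  This is exactness of `B(b, b) → C(F b, F b) → π₀(K_s)` at `C(F b, F b)`. -/
theorem brown_exactness_at_hom {B : Type u₁} {C : Type u₂}
    [Groupoid.{v₁} B] [Groupoid.{v₂} C] (F : B ⥤ C) (hF : StarSurjective F)
    (b : B) (γ : F.obj b ⟶ F.obj b)
    (b' : B) (h' : F.obj b' = F.obj b) (β : b ⟶ b')
    (hβ : F.map β = γ ≫ eqToHom h'.symm) :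
    (∃ u : b' ⟶ b, F.map u = eqToHom h') ↔ ∃ β₀ : b ⟶ b, F.map β₀ = γ := by
  constructor
  · rintro ⟨u, hu⟩
    exact ⟨β ≫ u, by simp [hβ, hu]⟩
  · rintro ⟨β₀, hβ₀⟩
    refine ⟨Groupoid.inv β ≫ β₀, ?_⟩
    simp [Groupoid.inv_eq_inv, hβ, hβ₀]
end

section
/- Exactness at C(Fb, Fb) for the homotopy-fiber sequence: let F : B ⥤ C be a functor between groupoids, b an object of B, K the homotopy fiber over F b, and define δ : C(F b, F b) → π₀(K) by δ(γ) = [(b, γ)]. Then δ(γ) equals the basepoint [(b, 𝟙 (F b))] if and only if γ = F.map β for some β : b ⟶ b. Hence the sequence B(b, b) → C(F b, F b) →δ π₀(K) is exact at C(F b, F b) as pointed sets (the first map being β ↦ F.map β). -/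
open CategoryTheory

universe v₁ v₂ u₁ u₂

/-- Exactness at `C(F b, F b)` for the homotopy-fiber sequence: with `K` the homotopy
fiber of `F : B ⥤ C` over `F b` (the comma category of the constant functor at `F b` and
`F`) and `δ(γ) = [(b, γ)]`, the class `δ(γ)` equals the basepoint `[(b, 𝟙 (F b))]` in
`π₀(K)` if and only if `γ = F.map β` for some `β : b ⟶ b`. -/
theorem homotopy_fiber_exactness_at_hom {B : Type u₁} {C : Type u₂}
    [Groupoid.{v₁} B] [Groupoid.{v₂} C] (F : B ⥤ C) (b : B) (γ : F.obj b ⟶ F.obj b) :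
    Quotient.mk (isIsomorphicSetoid (Comma (Functor.fromPUnit (F.obj b)) F))
        ⟨⟨PUnit.unit⟩, b, γ⟩ =
      Quotient.mk (isIsomorphicSetoid (Comma (Functor.fromPUnit (F.obj b)) F))
        ⟨⟨PUnit.unit⟩, b, 𝟙 (F.obj b)⟩ ↔
    ∃ β : b ⟶ b, F.map β = γ := by
  rw [Quotient.eq]
  constructor
  · rintro ⟨e⟩
    have w := e.hom.w
    simp at w
    refine ⟨Groupoid.inv e.hom.right, ?_⟩
    have h : F.map e.hom.right = inv γ := IsIso.eq_inv_of_hom_inv_id w.symm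
    rw [Groupoid.inv_eq_inv, F.map_inv]; simp [h]
  · rintro ⟨β, hβ⟩
    refine ⟨⟨?_, ?_, ?_, ?_⟩⟩
    · exact ⟨𝟙 _, Groupoid.inv β, by simp [← hβ]⟩
    · exact ⟨𝟙 _, β, by simp [← hβ]⟩
    · ext <;> simp
    · ext <;> simp
end

section
/- π₀ preserves exactness for pointed groupoids: let A, B, C be pointed groupoids, F : A ⥤ B and G : B ⥤ C pointed functors, and φ a pointed natural transformation from the constant functor at the basepoint of C to F ⋙ G. Let K be the homotopy kernel of G (objects (b, c₁ : * ⟶ G b)) with its projection to B, and L : A ⥤ K the comparison functor induced by φ (L(a) = (F a, φ_a)). If L is full and essentially surjective, then the induced sequence of pointed sets π₀(A) → π₀(B) → π₀(C) is exact: the image of π₀(F) equals the preimage of the basepoint class under π₀(G). -/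
open CategoryTheory

universe v₁ v₂ v₃ u₁ u₂ u₃

variable {A : Type u₁} {B : Type u₂} {C : Type u₃}
variable [Groupoid.{v₁} A] [Groupoid.{v₂} B] [Groupoid.{v₃} C]

/-- The comparison functor from `A` to the homotopy kernel of `G : B ⥤ C` (the comma
category of the constant functor at the basepoint `c₀` of `C` and `G`), induced by a
natural transformation `φ` from the constant functor at `c₀` to `F ⋙ G`:
it sends `a` to `(F a, φ_a)`. -/
def comparisonL (c₀ : C) (F : A ⥤ B) (G : B ⥤ C)
    (φ : (Functor.const A).obj c₀ ⟶ F ⋙ G) :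
    A ⥤ Comma (Functor.fromPUnit c₀) G where
  obj a := ⟨⟨PUnit.unit⟩, F.obj a, φ.app a⟩
  map {a a'} α :=
    { left := 𝟙 _
      right := F.map α
      w := by simpa using φ.naturality α }

/-- `π₀` preserves exactness for pointed groupoids: if the comparison functor `L : A ⥤ K`
to the homotopy kernel `K` of `G` (induced by the pointed 2-cell `φ : 0 ⟶ F ⋙ G`) is full
and essentially surjective, then the sequence of pointed sets
`π₀(A) → π₀(B) → π₀(C)` is exact: the image of `π₀(F)` equals the preimage of the
basepoint class under `π₀(G)`. -/
theorem pi0_preserves_exactness (a₀ : A) (b₀ : B) (c₀ : C)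
    (F : A ⥤ B) (G : B ⥤ C) (hF : F.obj a₀ = b₀) (hG : G.obj b₀ = c₀)
    (φ : (Functor.const A).obj c₀ ⟶ F ⋙ G)
    (hφ : φ.app a₀ = eqToHom (by simp only [Functor.const_obj_obj, Functor.comp_obj, hF, hG]))
    (hfull : (comparisonL c₀ F G φ).Full)
    (hes : (comparisonL c₀ F G φ).EssSurj) :
    ∀ b : B,
      (∃ a : A, Quotient.mk (isIsomorphicSetoid B) (F.obj a) =
          Quotient.mk (isIsomorphicSetoid B) b) ↔
        Quotient.mk (isIsomorphicSetoid C) (G.obj b) =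
          Quotient.mk (isIsomorphicSetoid C) c₀ := by
  intro b
  constructor
  · rintro ⟨a, ha⟩
    apply Quotient.sound
    have hab : IsIsomorphic (F.obj a) b := Quotient.exact ha
    obtain ⟨e⟩ := hab
    exact ⟨(G.mapIso e).symm ≪≫ ((Groupoid.isoEquivHom _ _).symm (φ.app a)).symm⟩
  · intro h
    obtain ⟨e⟩ : IsIsomorphic (G.obj b) c₀ := Quotient.exact h
    let k : Comma (Functor.fromPUnit c₀) G := ⟨⟨PUnit.unit⟩, b, e.inv⟩
    obtain ⟨a, ⟨i⟩⟩ := (hes.mem_essImage k)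
    refine ⟨a, Quotient.sound ⟨?_⟩⟩
    exact (Comma.snd _ _).mapIso i
end
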